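/- arXiv:1802.01208 — 5 statements merged into one kernel-verified Lean document; each statement's English description precedes it below -/
import Mathlib

section
/- Let M₁, …, M_k be n×n matrices with nonnegative entries such that each Mᵢ is primitive (some power of Mᵢ has all entries strictly positive) and each Mᵢ has strictly positive diagonal entries. Then the product M₁⋯M_k is primitive. -/
/-- A square nonnegative matrix is primitive if some positive power of it
has all entries strictly positive. -/
def IsPrimitive {n : ℕ} (M : Matrix (Fin n) (Fin n) ℝ) : Prop :=
  ∃ m : ℕ, 0 < m ∧ ∀ i j, 0 < (M ^ m) i j

/-!
The product `P = M₁ ⋯ M_k` is entrywise nonnegative, and every positive entry of `M₁` stays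
positive in `P`: the remaining factors have positive diagonals, so `P i j ≥ M₁ i j · (M₂ ⋯ M_k) j j`.
Induction on `m` then shows that `P ^ m` is positive wherever `M₁ ^ m` is.
-/

namespace Matrix

variable {ι R : Type*} [Semiring R] [LinearOrder R] [IsStrictOrderedRing R]

section Mul

variable [Fintype ι] {A B : Matrix ι ι R}

theorem mul_apply_nonneg (hA : ∀ i j, 0 ≤ A i j) (hB : ∀ i j, 0 ≤ B i j) (i j : ι) :
    0 ≤ (A * B) i j :=
  Finset.sum_nonneg fun l _ => mul_nonneg (hA i l) (hB l j)

theorem mul_apply_pos_iff (hA : ∀ i j, 0 ≤ A i j) (hB : ∀ i j, 0 ≤ B i j) {i j : ι} :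
    0 < (A * B) i j ↔ ∃ l, 0 < A i l ∧ 0 < B l j := by
  rw [mul_apply, Finset.sum_pos_iff_of_nonneg fun l _ => mul_nonneg (hA i l) (hB l j)]
  refine exists_congr fun l => ⟨fun h => ?_, fun h => ⟨Finset.mem_univ l, mul_pos h.1 h.2⟩⟩
  exact (pos_and_pos_or_neg_and_neg_of_mul_pos h.2).resolve_right
    fun hneg => (hA i l).not_gt hneg.1

theorem mul_apply_pos_of_left (hA : ∀ i j, 0 ≤ A i j) (hB : ∀ i j, 0 ≤ B i j) {i j : ι}
    (hBj : 0 < B j j) (hAij : 0 < A i j) : 0 < (A * B) i j :=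
  (mul_apply_pos_iff hA hB).2 ⟨j, hAij, hBj⟩

theorem mul_apply_pos_of_right (hA : ∀ i j, 0 ≤ A i j) (hB : ∀ i j, 0 ≤ B i j) {i j : ι}
    (hAi : 0 < A i i) (hBij : 0 < B i j) : 0 < (A * B) i j :=
  (mul_apply_pos_iff hA hB).2 ⟨i, hAi, hBij⟩

end Mul

theorem pow_apply_pos_of_apply_pos_imp [Fintype ι] [DecidableEq ι] {A P : Matrix ι ι R}
    (hA : ∀ i j, 0 ≤ A i j) (hP : ∀ i j, 0 ≤ P i j) (hAP : ∀ i j, 0 < A i j → 0 < P i j)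
    (m : ℕ) {i j : ι} (h : 0 < (A ^ m) i j) : 0 < (P ^ m) i j := by
  induction m generalizing j with
  | zero => simpa using h
  | succ m ih =>
    rw [pow_succ] at h ⊢
    obtain ⟨l, hil, hlj⟩ := (mul_apply_pos_iff (pow_apply_nonneg hA m) hA).1 h
    exact (mul_apply_pos_iff (pow_apply_nonneg hP m) hP).2 ⟨l, ih hil, hAP l j hlj⟩

variable (ι R) in
def nonnegPosDiagSubmonoid [Fintype ι] [DecidableEq ι] : Submonoid (Matrix ι ι R) where
  carrier := {A | (∀ i j, 0 ≤ A i j) ∧ ∀ i, 0 < A i i}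
  mul_mem' := fun ⟨hA, hAd⟩ ⟨hB, hBd⟩ =>
    ⟨mul_apply_nonneg hA hB, fun i => mul_apply_pos_of_left hA hB (hBd i) (hAd i)⟩
  one_mem' := ⟨fun i j => by by_cases h : i = j <;> simp [one_apply, h], fun i => by simp⟩

theorem list_prod_apply_pos_of_mem [Fintype ι] [DecidableEq ι] {L : List (Matrix ι ι R)}
    (hL : ∀ B ∈ L, B ∈ nonnegPosDiagSubmonoid ι R) {A : Matrix ι ι R} (hA : A ∈ L) {i j : ι}
    (hij : 0 < A i j) : 0 < L.prod i j := by
  obtain ⟨s, t, rfl⟩ := List.append_of_mem hA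
  set S := nonnegPosDiagSubmonoid ι R
  have hs : s.prod ∈ S := list_prod_mem fun B hB => hL B (by simp [hB])
  have ht : t.prod ∈ S := list_prod_mem fun B hB => hL B (by simp [hB])
  have hAS : A ∈ S := hL A hA
  rw [List.prod_append, List.prod_cons]
  exact mul_apply_pos_of_right hs.1 (mul_apply_nonneg hAS.1 ht.1) (hs.2 i)
    (mul_apply_pos_of_left hAS.1 ht.1 (ht.2 j) hij)

end Matrix

theorem IsPrimitive.of_apply_pos_imp {n : ℕ} {A P : Matrix (Fin n) (Fin n) ℝ}
    (hA : ∀ i j, 0 ≤ A i j) (hP : ∀ i j, 0 ≤ P i j) (hAP : ∀ i j, 0 < A i j → 0 < P i j)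
    (h : IsPrimitive A) : IsPrimitive P :=
  let ⟨m, hm, hpos⟩ := h
  ⟨m, hm, fun i j => Matrix.pow_apply_pos_of_apply_pos_imp hA hP hAP m (hpos i j)⟩

/-- A product of primitive nonnegative matrices with strictly positive
diagonals is primitive. -/
theorem prod_primitive_of_posDiag {n k : ℕ} (hk : 1 ≤ k)
    (M : Fin k → Matrix (Fin n) (Fin n) ℝ)
    (hnonneg : ∀ i a b, 0 ≤ M i a b)
    (hprim : ∀ i, IsPrimitive (M i))
    (hdiag : ∀ i a, 0 < M i a a) :
    IsPrimitive (List.ofFn M).prod := by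
  have hmem : ∀ A ∈ List.ofFn M, A ∈ Matrix.nonnegPosDiagSubmonoid (Fin n) ℝ := by
    simp only [List.mem_ofFn']
    rintro _ ⟨i, rfl⟩
    exact ⟨hnonneg i, hdiag i⟩
  let i₀ : Fin k := ⟨0, hk⟩
  exact (hprim i₀).of_apply_pos_imp (hnonneg i₀) (Submonoid.list_prod_mem _ hmem).1
    fun a b => Matrix.list_prod_apply_pos_of_mem hmem (List.mem_ofFn.2 ⟨i₀, rfl⟩)
end

section
/- Let g be a reflexive relation on a finite nonempty set V and let tf(g) = {(x,y) : C_x ⊆ C_y} be its transitive front, where C_k = {u : (u,k) ∈ g}. Then g ∘ tf(g) = g, and every relation h on V satisfying g ∘ h = g is contained in tf(g). Consequently tf(g) is the unique maximal (densest) relation h on V with g ∘ h = g. -/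
/-- The in-neighborhood C_k = {u : (u,k) ∈ g} of a vertex k in the digraph g. -/
def inNbhd {V : Type*} (g : V → V → Prop) (k : V) : Set V := {u | g u k}

/-- The transitive front tf(g) = {(x,y) : C_x ⊆ C_y}. -/
def transFront {V : Type*} (g : V → V → Prop) (x y : V) : Prop :=
  inNbhd g x ⊆ inNbhd g y

section TransFront

variable {V : Type*} {g h : V → V → Prop}

/-- `transFront g` is the right residual `g \ g` in the quantale of relations. -/
theorem comp_le_iff_le_transFront : Relation.Comp g h ≤ g ↔ h ≤ transFront g :=
  ⟨fun hle _ y hxy u hu => hle u y ⟨_, hu, hxy⟩,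
    fun hle _ _ ⟨x, hu, hxy⟩ => hle x _ hxy hu⟩

theorem le_comp_transFront : g ≤ Relation.Comp g (transFront g) :=
  fun _ y hxy => ⟨y, hxy, subset_rfl⟩

theorem comp_transFront : Relation.Comp g (transFront g) = g :=
  le_antisymm (comp_le_iff_le_transFront.2 le_rfl) le_comp_transFront

end TransFront

theorem transFront_maximally_dense_general {V : Type*}
    (g : V → V → Prop) :
    Relation.Comp g (transFront g) = g ∧
    ∀ h : V → V → Prop, Relation.Comp g h = g →
      ∀ x y, h x y → transFront g x y :=
  ⟨comp_transFront, fun _ hcomp => comp_le_iff_le_transFront.1 hcomp.le⟩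

/-- For a reflexive digraph g on a finite nonempty vertex set,
g ∘ tf(g) = g, and every relation h with g ∘ h = g is contained in tf(g);
thus tf(g) is the unique maximal (densest) relation h with g ∘ h = g. -/
theorem transFront_maximally_dense {V : Type*} [Fintype V] [Nonempty V]
    (g : V → V → Prop) (hrefl : ∀ x, g x x) :
    Relation.Comp g (transFront g) = g ∧
    ∀ h : V → V → Prop, Relation.Comp g h = g →
      ∀ x y, h x y → transFront g x y :=
  transFront_maximally_dense_general g
end

section
/- Let g be a reflexive relation on a finite nonempty set V and define its undirected transitive front utf(g) = {(x,y) : C_x = C_y}, where C_k = {u : (u,k) ∈ g}. Then: (i) utf(g) is an equivalence relation on V (so its components are disjoint cliques); (ii) utf(g) ⊆ g; (iii) g ∘ utf(g) = g; and (iv) every symmetric relation h on V with g ∘ h = g satisfies h ⊆ utf(g), so utf(g) is the unique maximal symmetric relation h with g ∘ h = g. -/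
/-- The undirected transitive front utf(g) = {(x,y) : C_x = C_y}. -/
def undirTransFront {V : Type*} (g : V → V → Prop) (x y : V) : Prop :=
  inNbhd g x = inNbhd g y

/-!
`utf(g)` is the kernel of `k ↦ C_k`. A relation `h` satisfies `g ∘ h ⊆ g` exactly when every
`h`-step `z → y` enlarges the in-neighbourhood, `C_z ⊆ C_y`; for symmetric `h` this forces
`C_z = C_y`.
-/

section

variable {V : Type*} (g : V → V → Prop)

theorem undirTransFront_equivalence : Equivalence (undirTransFront g) :=
  ⟨fun _ => rfl, Eq.symm, Eq.trans⟩

variable {g}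

theorem undirTransFront.le (hrefl : ∀ x, g x x) {x y : V} (hxy : undirTransFront g x y) :
    g x y := by
  have hx : x ∈ inNbhd g x := hrefl x
  rwa [hxy] at hx

theorem inNbhd_subset_of_comp_le {h : V → V → Prop} (hle : Relation.Comp g h ≤ g) {x y : V}
    (hxy : h x y) : inNbhd g x ⊆ inNbhd g y :=
  fun u hu => hle u y ⟨x, hu, hxy⟩

theorem comp_undirTransFront : Relation.Comp g (undirTransFront g) = g := by
  refine le_antisymm ?_ fun x y hxy => ⟨y, hxy, rfl⟩
  rintro x y ⟨z, hxz, hzy⟩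
  exact (hzy ▸ hxz : x ∈ inNbhd g y)

theorem undirTransFront_of_comp_le {h : V → V → Prop} (hsymm : ∀ x y, h x y → h y x)
    (hle : Relation.Comp g h ≤ g) {x y : V} (hxy : h x y) : undirTransFront g x y :=
  (inNbhd_subset_of_comp_le hle hxy).antisymm (inNbhd_subset_of_comp_le hle (hsymm x y hxy))

end

theorem undirTransFront_properties_general {V : Type*}
    (g : V → V → Prop) (hrefl : ∀ x, g x x) :
    Equivalence (undirTransFront g) ∧
    (∀ x y, undirTransFront g x y → g x y) ∧
    Relation.Comp g (undirTransFront g) = g ∧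
    ∀ h : V → V → Prop, (∀ x y, h x y → h y x) → Relation.Comp g h = g →
      ∀ x y, h x y → undirTransFront g x y :=
  ⟨undirTransFront_equivalence g, fun _ _ => undirTransFront.le hrefl, comp_undirTransFront,
    fun _ hsymm hcomp _ _ => undirTransFront_of_comp_le hsymm hcomp.le⟩

/-- For a reflexive digraph g on a finite nonempty vertex set:
(i) utf(g) is an equivalence relation (so its components are disjoint cliques);
(ii) utf(g) ⊆ g; (iii) g ∘ utf(g) = g; (iv) every symmetric relation h with
g ∘ h = g satisfies h ⊆ utf(g), so utf(g) is the unique maximal symmetric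
relation h with g ∘ h = g. -/
theorem undirTransFront_properties {V : Type*} [Fintype V] [Nonempty V]
    (g : V → V → Prop) (hrefl : ∀ x, g x x) :
    Equivalence (undirTransFront g) ∧
    (∀ x y, undirTransFront g x y → g x y) ∧
    Relation.Comp g (undirTransFront g) = g ∧
    ∀ h : V → V → Prop, (∀ x y, h x y → h y x) → Relation.Comp g h = g →
      ∀ x y, h x y → undirTransFront g x y :=
  undirTransFront_properties_general g hrefl
end

section
/- Let V be a finite set with n ≥ 1 elements and let g₁, …, g_m be reflexive relations on V, each strongly connected (for every pair of vertices x, y there is a directed path from x to y using edges of that single relation). If m ≥ n − 1, then the composition g₁ ∘ g₂ ∘ ⋯ ∘ g_m is the complete relation V × V. -/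
/-- Composition of a list of relations; the empty composition is equality. -/
def compList {V : Type*} : List (V → V → Prop) → (V → V → Prop)
  | [] => Eq
  | g :: l => Relation.Comp g (compList l)

/-!
For a fixed target `y`, let `Sₖ` be the set of vertices related to `y` by the composition of the
last `k` relations. Each `Sₖ` contains `y`, and `Sₖ₊₁ ⊇ Sₖ` by reflexivity. If `Sₖ ≠ V`, a path
of the next relation from outside `Sₖ` into `Sₖ` has an edge `a → b` with `a ∉ Sₖ`, `b ∈ Sₖ`,
so `a ∈ Sₖ₊₁`. Hence `|Sₖ| ≥ min n (k + 1)`, and `m ≥ n - 1` relations reach all of `V`.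
-/

theorem Relation.ReflTransGen.exists_rel_notMem_mem {α : Type*} {r : α → α → Prop} {S : Set α}
    {a b : α} (h : Relation.ReflTransGen r a b) (ha : a ∉ S) (hb : b ∈ S) :
    ∃ u v, u ∉ S ∧ v ∈ S ∧ r u v := by
  induction h using Relation.ReflTransGen.head_induction_on with
  | refl => exact absurd hb ha
  | @head a c hac _ ih =>
    by_cases hc : c ∈ S
    · exact ⟨a, c, ha, hc, hac⟩
    · exact ih hc

theorem min_card_le_ncard_predecessors {V : Type*} [Finite V] {g : V → V → Prop}
    (hrefl : ∀ x, g x x) (hconn : ∀ x y, Relation.ReflTransGen g x y) {S : Set V}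
    (hS : S.Nonempty) :
    min (Nat.card V) (S.ncard + 1) ≤ {x | ∃ z, g x z ∧ z ∈ S}.ncard := by
  set T := {x | ∃ z, g x z ∧ z ∈ S}
  have hST : S ⊆ T := fun x hx => ⟨x, hrefl x, hx⟩
  by_cases hSuniv : S = Set.univ
  · have hT : T = Set.univ := Set.eq_univ_of_univ_subset (hSuniv ▸ hST)
    rw [hT, Set.ncard_univ]
    exact min_le_left _ _
  obtain ⟨x, hx⟩ := (Set.ne_univ_iff_exists_notMem S).1 hSuniv
  obtain ⟨y, hy⟩ := hS
  obtain ⟨a, b, ha, hb, hab⟩ := (hconn x y).exists_rel_notMem_mem hx hy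
  calc min (Nat.card V) (S.ncard + 1)
      ≤ S.ncard + 1 := min_le_right _ _
    _ = (insert a S).ncard := (Set.ncard_insert_of_notMem ha).symm
    _ ≤ T.ncard := Set.ncard_le_ncard (Set.insert_subset ⟨b, hab, hb⟩ hST)

theorem compList_refl {V : Type*} {l : List (V → V → Prop)} (hrefl : ∀ g ∈ l, ∀ x, g x x)
    (x : V) : compList l x x := by
  induction l with
  | nil => rfl
  | cons g l ih =>
    exact ⟨x, hrefl g List.mem_cons_self x, ih fun r hr => hrefl r (List.mem_cons_of_mem g hr)⟩

theorem min_card_le_ncard_compList {V : Type*} [Finite V] {l : List (V → V → Prop)}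
    (hrefl : ∀ g ∈ l, ∀ x, g x x) (hconn : ∀ g ∈ l, ∀ x y, Relation.ReflTransGen g x y)
    (y : V) : min (Nat.card V) (l.length + 1) ≤ {x | compList l x y}.ncard := by
  induction l with
  | nil =>
    have hsingleton : {x | compList ([] : List (V → V → Prop)) x y} = {y} := rfl
    rw [hsingleton, Set.ncard_singleton]
    exact min_le_right _ _
  | cons g l ih =>
    have hrefl' : ∀ r ∈ l, ∀ x, r x x := fun r hr => hrefl r (List.mem_cons_of_mem g hr)
    have hconn' : ∀ r ∈ l, ∀ x y, Relation.ReflTransGen r x y :=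
      fun r hr => hconn r (List.mem_cons_of_mem g hr)
    have hstep := min_card_le_ncard_predecessors (hrefl g List.mem_cons_self)
      (hconn g List.mem_cons_self) (S := {x | compList l x y}) ⟨y, compList_refl hrefl' y⟩
    have hprev := ih hrefl' hconn'
    simp only [List.length_cons]
    exact le_trans (by omega) hstep

theorem compList_of_card_le {V : Type*} [Finite V] {l : List (V → V → Prop)}
    (hrefl : ∀ g ∈ l, ∀ x, g x x) (hconn : ∀ g ∈ l, ∀ x y, Relation.ReflTransGen g x y)
    (hl : Nat.card V ≤ l.length + 1) (x y : V) : compList l x y := by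
  have hcard := min_card_le_ncard_compList hrefl hconn y
  rw [min_eq_left hl] at hcard
  have huniv : {x | compList l x y} = Set.univ := by
    by_contra hne
    exact (Set.ncard_lt_card hne).not_ge hcard
  exact Set.eq_univ_iff_forall.1 huniv x

theorem compList_complete_of_strongly_connected_general {V : Type*} [Fintype V]
    {m : ℕ} (g : Fin m → (V → V → Prop))
    (hrefl : ∀ i x, g i x x)
    (hconn : ∀ i x y, Relation.ReflTransGen (g i) x y)
    (hm : Fintype.card V - 1 ≤ m) :
    ∀ x y, compList (List.ofFn g) x y :=
  compList_of_card_le (List.forall_mem_ofFn_iff.2 hrefl) (List.forall_mem_ofFn_iff.2 hconn)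
    (by rw [Nat.card_eq_fintype_card, List.length_ofFn]; omega)

/-- If g₁,…,g_m are reflexive strongly connected relations on a finite set V
with n elements and m ≥ n − 1, then g₁ ∘ ⋯ ∘ g_m is the complete relation. -/
theorem compList_complete_of_strongly_connected {V : Type*} [Fintype V] [Nonempty V]
    {m : ℕ} (g : Fin m → (V → V → Prop))
    (hrefl : ∀ i x, g i x x)
    (hconn : ∀ i x y, Relation.ReflTransGen (g i) x y)
    (hm : Fintype.card V - 1 ≤ m) :
    ∀ x y, compList (List.ofFn g) x y :=
  compList_complete_of_strongly_connected_general g hrefl hconn hm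
end

section
/- Define F : ℝ → ℝ by F(y) = (y+1)/2 if y < −1 and F(y) = 2y/(y+1) if y ≥ −1; define G : ℝ → ℝ by G(z) = 2z + 1 if z ≤ 0 and G(z) = 2z − 1 if z > 0; and define φ(y) = (y+1)/(y−1). Then for every y ≤ 0 with y ≠ −1: (i) −1 ≤ φ(y) < 1; (ii) F(y) ≤ 0 and F(y) ≠ −1 unless the orbit leaves the domain trivially; and (iii) φ(F(y)) = G(φ(y)). Thus φ conjugates the piecewise map F on the nonpositive reals to the map z ↦ 2z+1 (z ≤ 0), z ↦ 2z−1 (z > 0) on [−1,1), which is conjugate to the baker's map. -/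
/-- The piecewise map F(y) = (y+1)/2 if y < −1, F(y) = 2y/(y+1) otherwise. -/
noncomputable def Fmap (y : ℝ) : ℝ := if y < -1 then (y + 1) / 2 else 2 * y / (y + 1)

/-- The map G(z) = 2z+1 if z ≤ 0, G(z) = 2z−1 if z > 0 (conjugate to the
baker's map). -/
noncomputable def Gmap (z : ℝ) : ℝ := if z ≤ 0 then 2 * z + 1 else 2 * z - 1

/-- The change of coordinates φ(y) = (y+1)/(y−1). -/
noncomputable def phiMap (y : ℝ) : ℝ := (y + 1) / (y - 1)

/-! Both branches of `Fmap` become affine after the Möbius change of coordinates `phiMap`,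
and since `phiMap` sends `y < -1` to `(0, 1)` and `[-1, 0]` to `[-1, 0]`, the branch of `Fmap`
taken at `y` is exactly the branch of `Gmap` taken at `phiMap y`. -/

section

variable {y : ℝ}

theorem phiMap_lt_one (hy : y < 1) : phiMap y < 1 :=
  (div_lt_one_of_neg (by linarith)).2 (by linarith)

theorem neg_one_le_phiMap (hy : y ≤ 0) : -1 ≤ phiMap y := by
  rw [phiMap, le_div_iff_of_neg (by linarith)]
  linarith

theorem phiMap_pos_iff (hy : y < 1) : 0 < phiMap y ↔ y < -1 := by
  rw [phiMap, lt_div_iff_of_neg (by linarith), zero_mul]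
  constructor <;> intro h <;> linarith

theorem Gmap_phiMap (hy : y < 1) :
    Gmap (phiMap y) = if y < -1 then 2 * phiMap y - 1 else 2 * phiMap y + 1 := by
  by_cases h : y < -1
  · rw [Gmap, if_neg (not_le.2 ((phiMap_pos_iff hy).2 h)), if_pos h]
  · rw [Gmap, if_pos (not_lt.1 (mt (phiMap_pos_iff hy).1 h)), if_neg h]

theorem phiMap_half_add_one (hy : y ≠ 1) : phiMap ((y + 1) / 2) = 2 * phiMap y - 1 := by
  have hy' : y - 1 ≠ 0 := sub_ne_zero.2 hy
  have hy'' : (y + 1) / 2 - 1 ≠ 0 := fun h => hy (by linarith)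
  unfold phiMap
  rw [div_eq_iff hy'']
  field_simp
  ring

theorem phiMap_two_mul_div (hy : y ≠ 1) (hy1 : y ≠ -1) :
    phiMap (2 * y / (y + 1)) = 2 * phiMap y + 1 := by
  have hy' : y - 1 ≠ 0 := sub_ne_zero.2 hy
  have hy1' : y + 1 ≠ 0 := fun h => hy1 (by linarith)
  have hy'' : 2 * y / (y + 1) - 1 ≠ 0 := by
    rw [div_sub_one hy1']
    exact div_ne_zero (fun h => hy (by linarith)) hy1'
  unfold phiMap
  rw [div_eq_iff hy'']
  field_simp
  ring

theorem phiMap_Fmap (hy : y < 1) (hy1 : y ≠ -1) : phiMap (Fmap y) = Gmap (phiMap y) := by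
  rw [Gmap_phiMap hy, Fmap]
  split_ifs
  · exact phiMap_half_add_one hy.ne
  · exact phiMap_two_mul_div hy.ne hy1

theorem Fmap_nonpos (hy : y ≤ 0) : Fmap y ≤ 0 := by
  unfold Fmap
  split_ifs with h
  · linarith
  · exact div_nonpos_of_nonpos_of_nonneg (by linarith) (by linarith)

theorem Fmap_eq_neg_one (h : Fmap y = -1) : y = -3 ∨ y = -1 / 3 := by
  unfold Fmap at h
  split_ifs at h
  · left
    linarith
  · have hy1 : y + 1 ≠ 0 := fun h0 => by simp [h0] at h
    right
    rw [div_eq_iff hy1] at h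
    linarith

end

/-- For every y ≤ 0 with y ≠ −1: (i) −1 ≤ φ(y) < 1; (ii) F(y) ≤ 0, and
F(y) = −1 only at the trivial exceptional points y = −3 and y = −1/3 (where
the orbit leaves the domain trivially); (iii) φ(F(y)) = G(φ(y)). Thus φ
conjugates F on the nonpositive reals to the map G on [−1,1). -/
theorem phi_conjugates_F_to_G (y : ℝ) (hy : y ≤ 0) (hy1 : y ≠ -1) :
    (-1 ≤ phiMap y ∧ phiMap y < 1) ∧
    (Fmap y ≤ 0 ∧ (Fmap y = -1 → y = -3 ∨ y = -1/3)) ∧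
    phiMap (Fmap y) = Gmap (phiMap y) := by
  have hy' : y < 1 := by linarith
  exact ⟨⟨neg_one_le_phiMap hy, phiMap_lt_one hy'⟩, ⟨Fmap_nonpos hy, Fmap_eq_neg_one⟩,
    phiMap_Fmap hy' hy1⟩
end
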